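/- For every p > 0, as A → 0⁺, J₀(A) ~ (16Bp²/(3(2p+3)(4p+3)))·A^{−3/(2p)}; that is, lim_{A→0⁺} A^{3/(2p)} J₀(A) = 16Bp²/(3(2p+3)(4p+3)), where B = Σ_{m=1}^∞ m^{−3}. Moreover J₀(A) = J₁(A) − J₂(A) for all A > 0. -/

import Mathlib

open Filter Topology

/-- The index set `Γ = {(j,l) : j,l ∈ ℤ₊}`. -/
abbrev Idx : Type := ℕ × ℕ

noncomputable section

/-- The sequence `a_ν = ((j+1)(l+1))^p` for `ν = (j,l)`. -/
def aT (p : ℝ) (ν : Idx) : ℝ := (((ν.1 : ℝ) + 1) * ((ν.2 : ℝ) + 1)) ^ p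

/-- The sequence `σ_ν = (j+l+1)^{1/2}` for `ν = (j,l)`. -/
def sigT (ν : Idx) : ℝ := ((ν.1 : ℝ) + (ν.2 : ℝ) + 1) ^ ((1 : ℝ) / 2)

/-- The constant `B = Σ_{m=1}^∞ m^{−3}`. -/
def Bsum : ℝ := ∑' m : ℕ, 1 / ((m : ℝ) + 1) ^ 3

/-- `J₁(A) = Σ_{ν∈Γ} σ_ν⁴ (1 − A a_ν²)₊`. -/
def J1fun (p A : ℝ) : ℝ :=
  ∑' ν : Idx, sigT ν ^ 4 * max (1 - A * aT p ν ^ 2) 0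

/-- `J₂(A) = A Σ_{ν∈Γ} a_ν² σ_ν⁴ (1 − A a_ν²)₊`. -/
def J2fun (p A : ℝ) : ℝ :=
  A * ∑' ν : Idx, aT p ν ^ 2 * sigT ν ^ 4 * max (1 - A * aT p ν ^ 2) 0

/-- `J₀(A) = Σ_{ν∈Γ} σ_ν⁴ (1 − A a_ν²)₊²`. -/
def J0fun (p A : ℝ) : ℝ :=
  ∑' ν : Idx, sigT ν ^ 4 * (max (1 - A * aT p ν ^ 2) 0) ^ 2

open Finset

/-!
Put `A = ε^(2p)`, `c_ν = (j+1)(l+1)` and `h(u) = (1 - u^(2p))₊²`, so that the terms of `J₀(A)` are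
`(j+l+1)² h(ε c_ν)`, and split `(j+l+1)² = (j+1)² + (l+1)² + (2jl - 1)`. By symmetry the first two
pieces give twice `ε³ Σ_ν (l+1)² h(ε c_ν) = Σ_j (j+1)⁻³ R(ε(j+1))`, where `R(δ)` is the Riemann sum
with mesh `δ` of `u² h(u)` on `[0, 1]`; it is bounded by `1` and tends to
`∫₀¹ u² h = 1/3 - 2/(2p+3) + 1/(4p+3)` (expand `h` and compare power sums with integrals),
so dominated convergence gives `2 B ∫₀¹ u² h`. The cross piece is `O(c_ν)`, and
`ε³ c_ν h(ε c_ν) ≤ c_ν⁻²` because `u³ h(u) ≤ 1`; its terms tend to `0`, so dominated convergence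
kills it. The identity `J₀ = J₁ - J₂` is termwise `x₊² = x₊ x`.
-/

lemma tendsto_rpow_nhdsGT_zero {q : ℝ} (hq : 0 < q) :
    Tendsto (fun x : ℝ => x ^ q) (𝓝[>] 0) (𝓝[>] 0) :=
  tendsto_nhdsWithin_iff.mpr ⟨tendsto_nhdsWithin_of_tendsto_nhds (by
    convert (Real.continuousAt_rpow_const 0 q (Or.inr hq.le)).tendsto
    exact (Real.zero_rpow hq.ne').symm),
    eventually_nhdsWithin_of_forall fun _ hx => Real.rpow_pos_of_pos hx _⟩

lemma le_sum_range_succ_rpow {r : ℝ} (hr : 0 ≤ r) (N : ℕ) :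
    (N : ℝ) ^ (r + 1) / (r + 1) ≤ ∑ n ∈ range N, ((n : ℝ) + 1) ^ r := by
  have hmono : MonotoneOn (fun x : ℝ => x ^ r) (Set.Icc 0 (0 + N)) := fun x hx y _ hxy =>
    Real.rpow_le_rpow hx.1 hxy hr
  have h := hmono.integral_le_sum
  simp only [zero_add, Nat.cast_add, Nat.cast_one] at h
  rwa [integral_rpow (Or.inl (by linarith)), Real.zero_rpow (by linarith), sub_zero] at h

lemma sum_range_succ_rpow_le {r : ℝ} (hr : 0 ≤ r) (N : ℕ) :
    ∑ n ∈ range N, ((n : ℝ) + 1) ^ r ≤ ((N : ℝ) + 1) ^ (r + 1) / (r + 1) := by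
  have hmono : MonotoneOn (fun x : ℝ => x ^ r) (Set.Icc 1 (1 + N)) := fun x hx y _ hxy =>
    Real.rpow_le_rpow (by linarith [hx.1]) hxy hr
  have h := hmono.sum_le_integral
  rw [integral_rpow (Or.inl (by linarith)), Real.one_rpow] at h
  calc ∑ n ∈ range N, ((n : ℝ) + 1) ^ r = ∑ n ∈ range N, (1 + (n : ℝ)) ^ r := by
        simp only [add_comm]
    _ ≤ ((1 + N) ^ (r + 1) - 1) / (r + 1) := h
    _ ≤ ((N : ℝ) + 1) ^ (r + 1) / (r + 1) := by
        rw [add_comm (1 : ℝ)]; gcongr; linarith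

lemma tendsto_mul_floor_inv :
    Tendsto (fun δ : ℝ => δ * ⌊δ⁻¹⌋₊) (𝓝[>] 0) (𝓝 1) := by
  refine (tendsto_nat_floor_div_atTop.comp tendsto_inv_nhdsGT_zero).congr' ?_
  filter_upwards [self_mem_nhdsWithin] with δ hδ
  simp [div_eq_mul_inv, mul_comm]

lemma tendsto_rpow_mul_sum_range_floor {r : ℝ} (hr : 0 ≤ r) :
    Tendsto (fun δ : ℝ => δ ^ (r + 1) * ∑ n ∈ range ⌊δ⁻¹⌋₊, ((n : ℝ) + 1) ^ r)
      (𝓝[>] 0) (𝓝 (1 / (r + 1))) := by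
  have hF : Continuous (fun x : ℝ => x ^ (r + 1) / (r + 1)) :=
    (continuous_id.rpow_const fun _ => Or.inr (by linarith)).div_const _
  have hlim : ∀ {g : ℝ → ℝ}, Tendsto g (𝓝[>] 0) (𝓝 1) →
      Tendsto (fun δ => g δ ^ (r + 1) / (r + 1)) (𝓝[>] 0) (𝓝 (1 / (r + 1))) := fun hg => by
    simpa [Function.comp_def] using (hF.tendsto 1).comp hg
  have hup : Tendsto (fun δ : ℝ => δ * ⌊δ⁻¹⌋₊ + δ) (𝓝[>] 0) (𝓝 1) := by
    simpa using tendsto_mul_floor_inv.add (tendsto_nhdsWithin_of_tendsto_nhds tendsto_id)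
  refine tendsto_of_tendsto_of_tendsto_of_le_of_le' (hlim tendsto_mul_floor_inv) (hlim hup) ?_ ?_
  · filter_upwards [self_mem_nhdsWithin] with δ (hδ : 0 < δ)
    rw [Real.mul_rpow hδ.le (Nat.cast_nonneg _), mul_div_assoc]
    exact mul_le_mul_of_nonneg_left (le_sum_range_succ_rpow hr _) (by positivity)
  · filter_upwards [self_mem_nhdsWithin] with δ (hδ : 0 < δ)
    rw [← mul_add_one, Real.mul_rpow hδ.le (by positivity), mul_div_assoc]
    exact mul_le_mul_of_nonneg_left (sum_range_succ_rpow_le hr _) (by positivity)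

lemma one_lt_mul_succ_of_floor_le {δ : ℝ} (hδ : 0 < δ) {n : ℕ} (hn : ⌊δ⁻¹⌋₊ ≤ n) :
    1 < δ * ((n : ℝ) + 1) := by
  have h : δ⁻¹ < (n : ℝ) + 1 :=
    (Nat.lt_floor_add_one _).trans_le (by exact_mod_cast Nat.add_le_add_right hn 1)
  rwa [inv_lt_iff_one_lt_mul₀' hδ] at h

lemma mul_succ_mem_Ioc_of_lt_floor {δ : ℝ} (hδ : 0 < δ) {n : ℕ} (hn : n < ⌊δ⁻¹⌋₊) :
    δ * ((n : ℝ) + 1) ∈ Set.Ioc 0 1 := by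
  have h : ((n + 1 : ℕ) : ℝ) ≤ δ⁻¹ := (Nat.le_floor_iff (by positivity)).mp hn
  push_cast at h
  exact ⟨by positivity, (mul_le_mul_of_nonneg_left h hδ.le).trans_eq (mul_inv_cancel₀ hδ.ne')⟩

def ramp (p u : ℝ) : ℝ := max (1 - u ^ (2 * p)) 0

section ramp

variable {p u : ℝ}

lemma ramp_nonneg : 0 ≤ ramp p u := le_max_right _ _

lemma ramp_le_one (hu : 0 ≤ u) : ramp p u ≤ 1 :=
  max_le (by linarith [Real.rpow_nonneg hu (2 * p)]) zero_le_one

lemma ramp_eq_zero (hp : 0 < p) (hu : 1 ≤ u) : ramp p u = 0 :=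
  max_eq_right (by linarith [Real.one_le_rpow hu (by positivity : 0 ≤ 2 * p)])

lemma ramp_sq_of_le_one (hp : 0 ≤ p) (hu : 0 ≤ u) (hu1 : u ≤ 1) :
    ramp p u ^ 2 = 1 - 2 * u ^ (2 * p) + u ^ (4 * p) := by
  have hle : u ^ (2 * p) ≤ 1 := Real.rpow_le_one hu hu1 (by positivity)
  rw [ramp, max_eq_left (by linarith), show 4 * p = 2 * p * 2 by ring, Real.rpow_mul hu (2 * p) 2,
    Real.rpow_two]
  ring

lemma pow_three_mul_ramp_sq_le_one (hp : 0 < p) (hu : 0 ≤ u) : u ^ 3 * ramp p u ^ 2 ≤ 1 := by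
  rcases le_or_gt u 1 with hu1 | hu1
  · exact mul_le_one₀ (pow_le_one₀ hu hu1) (by positivity)
      (pow_le_one₀ ramp_nonneg (ramp_le_one hu))
  · simp [ramp_eq_zero hp hu1.le]

end ramp

def riemannSum (f : ℝ → ℝ) (δ : ℝ) : ℝ :=
  ∑ n ∈ range ⌊δ⁻¹⌋₊, δ * f (δ * ((n : ℝ) + 1))

section riemannSum

variable {f g : ℝ → ℝ} {δ : ℝ}

lemma tsum_eq_riemannSum (hδ : 0 < δ) (hf : ∀ u, 1 < u → f u = 0) :
    ∑' n : ℕ, δ * f (δ * ((n : ℝ) + 1)) = riemannSum f δ :=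
  tsum_eq_sum fun _ hn => by
    rw [hf _ (one_lt_mul_succ_of_floor_le hδ (not_lt.mp (mem_range.not.mp hn))), mul_zero]

lemma riemannSum_congr (hδ : 0 < δ) (h : ∀ u ∈ Set.Ioc 0 1, f u = g u) :
    riemannSum f δ = riemannSum g δ :=
  sum_congr rfl fun _ hn => by rw [h _ (mul_succ_mem_Ioc_of_lt_floor hδ (mem_range.mp hn))]

lemma abs_riemannSum_le_one (hδ : 0 < δ) (h : ∀ u ∈ Set.Ioc 0 1, |f u| ≤ 1) :
    |riemannSum f δ| ≤ 1 :=
  calc |riemannSum f δ| ≤ ∑ _n ∈ range ⌊δ⁻¹⌋₊, δ := by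
        refine (abs_sum_le_sum_abs _ _).trans (sum_le_sum fun n hn => ?_)
        rw [abs_mul, abs_of_pos hδ]
        exact mul_le_of_le_one_right hδ.le (h _ (mul_succ_mem_Ioc_of_lt_floor hδ (mem_range.mp hn)))
    _ = ⌊δ⁻¹⌋₊ * δ := by rw [sum_const, card_range, nsmul_eq_mul]
    _ ≤ δ⁻¹ * δ := by gcongr; exact Nat.floor_le (by positivity)
    _ = 1 := inv_mul_cancel₀ hδ.ne'

end riemannSum

lemma tendsto_riemannSum_rpow {r : ℝ} (hr : 0 ≤ r) :
    Tendsto (riemannSum (· ^ r)) (𝓝[>] 0) (𝓝 (1 / (r + 1))) := by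
  refine (tendsto_rpow_mul_sum_range_floor hr).congr' ?_
  filter_upwards [self_mem_nhdsWithin] with δ (hδ : 0 < δ)
  simp only [riemannSum, mul_sum]
  refine sum_congr rfl fun n _ => ?_
  rw [Real.mul_rpow hδ.le (by positivity), Real.rpow_add_one hδ.ne']
  ring

lemma tendsto_riemannSum_sq_mul_ramp_sq {p : ℝ} (hp : 0 < p) :
    Tendsto (riemannSum fun u => u ^ 2 * ramp p u ^ 2) (𝓝[>] 0)
      (𝓝 (8 * p ^ 2 / (3 * (2 * p + 3) * (4 * p + 3)))) := by
  have hpow : ∀ u ∈ Set.Ioc (0 : ℝ) 1,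
      u ^ 2 * ramp p u ^ 2 = u ^ (2 : ℝ) - 2 * u ^ (2 * p + 2) + u ^ (4 * p + 2) := by
    rintro u ⟨hu, hu1⟩
    rw [ramp_sq_of_le_one hp.le hu.le hu1, Real.rpow_add hu, Real.rpow_add hu, Real.rpow_two]
    ring
  have hlin : ∀ δ, riemannSum (fun u => u ^ (2 : ℝ) - 2 * u ^ (2 * p + 2) + u ^ (4 * p + 2)) δ =
      riemannSum (· ^ (2 : ℝ)) δ - 2 * riemannSum (· ^ (2 * p + 2)) δ
        + riemannSum (· ^ (4 * p + 2)) δ := fun δ => by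
    simp only [riemannSum, mul_sum, ← sum_sub_distrib, ← sum_add_distrib]
    exact sum_congr rfl fun n _ => by ring
  have hlim := ((tendsto_riemannSum_rpow (r := 2) (by norm_num)).sub
    ((tendsto_riemannSum_rpow (r := 2 * p + 2) (by positivity)).const_mul 2)).add
    (tendsto_riemannSum_rpow (r := 4 * p + 2) (by positivity))
  convert hlim.congr' ?_ using 2
  · field_simp
    ring
  · filter_upwards [self_mem_nhdsWithin] with δ (hδ : 0 < δ)
    rw [← hlin, riemannSum_congr hδ hpow]

def succProd (ν : Idx) : ℝ := ((ν.1 : ℝ) + 1) * ((ν.2 : ℝ) + 1)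

lemma succProd_pos (ν : Idx) : 0 < succProd ν := by
  unfold succProd
  positivity

lemma succProd_swap (ν : Idx) : succProd ν.swap = succProd ν := mul_comm _ _

lemma one_lt_mul_succProd {ε : ℝ} (hε : 0 < ε) {ν : Idx}
    (hν : ν ∉ range ⌊ε⁻¹⌋₊ ×ˢ range ⌊ε⁻¹⌋₊) : 1 < ε * succProd ν := by
  have h1 : (1 : ℝ) ≤ (ν.1 : ℝ) + 1 := by simp
  have h2 : (1 : ℝ) ≤ (ν.2 : ℝ) + 1 := by simp
  rw [mem_product, mem_range, mem_range, not_and_or, not_lt, not_lt] at hν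
  rw [succProd]
  rcases hν with hj | hl
  · nlinarith [one_lt_mul_succ_of_floor_le hε hj]
  · nlinarith [one_lt_mul_succ_of_floor_le hε hl]

lemma summable_of_eq_zero_of_one_lt_mul_succProd {ε : ℝ} (hε : 0 < ε) {F : Idx → ℝ}
    (hF : ∀ ν, 1 < ε * succProd ν → F ν = 0) : Summable F :=
  summable_of_ne_finset_zero fun _ hν => hF _ (one_lt_mul_succProd hε hν)

lemma summable_mul_ramp {p ε : ℝ} (hp : 0 < p) (hε : 0 < ε) (g : Idx → ℝ) :
    Summable fun ν => g ν * ramp p (ε * succProd ν) :=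
  summable_of_eq_zero_of_one_lt_mul_succProd hε fun ν h => by simp [ramp_eq_zero hp h.le]

lemma summable_one_div_succ_pow {k : ℕ} (hk : 1 < k) :
    Summable fun n : ℕ => 1 / ((n : ℝ) + 1) ^ k := by
  simpa using (summable_nat_add_iff 1).mpr (Real.summable_one_div_nat_pow.mpr hk)

section mainTerm

variable {p ε : ℝ}

lemma cube_mul_tsum_snd_sq_eq (hp : 0 < p) (hε : 0 < ε) :
    ε ^ 3 * ∑' ν : Idx, ((ν.2 : ℝ) + 1) ^ 2 * ramp p (ε * succProd ν) ^ 2 =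
      ∑' j : ℕ, riemannSum (fun u => u ^ 2 * ramp p u ^ 2) (ε * ((j : ℝ) + 1)) /
        ((j : ℝ) + 1) ^ 3 := by
  have hs : Summable fun ν : Idx => ((ν.2 : ℝ) + 1) ^ 2 * ramp p (ε * succProd ν) ^ 2 :=
    summable_of_eq_zero_of_one_lt_mul_succProd hε fun ν h => by simp [ramp_eq_zero hp h.le]
  rw [hs.tsum_prod, ← tsum_mul_left]
  refine tsum_congr fun j => ?_
  have hδ : 0 < ε * ((j : ℝ) + 1) := by positivity
  rw [← tsum_eq_riemannSum hδ fun u hu => by simp [ramp_eq_zero hp hu.le], ← tsum_div_const,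
    ← tsum_mul_left]
  refine tsum_congr fun l => ?_
  simp only [succProd, ← mul_assoc]
  field_simp

lemma tsum_fst_sq_eq_tsum_snd_sq :
    ∑' ν : Idx, ((ν.1 : ℝ) + 1) ^ 2 * ramp p (ε * succProd ν) ^ 2 =
      ∑' ν : Idx, ((ν.2 : ℝ) + 1) ^ 2 * ramp p (ε * succProd ν) ^ 2 := by
  rw [← (Equiv.prodComm ℕ ℕ).tsum_eq]
  simp [succProd_swap]

lemma tendsto_tsum_riemannSum_div_cube (hp : 0 < p) :
    Tendsto (fun ε : ℝ => ∑' j : ℕ, riemannSum (fun u => u ^ 2 * ramp p u ^ 2)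
        (ε * ((j : ℝ) + 1)) / ((j : ℝ) + 1) ^ 3) (𝓝[>] 0)
      (𝓝 (Bsum * (8 * p ^ 2 / (3 * (2 * p + 3) * (4 * p + 3))))) := by
  rw [Bsum, ← tsum_mul_right]
  refine tendsto_tsum_of_dominated_convergence (summable_one_div_succ_pow (k := 3) (by norm_num))
    (fun j => ?_) ?_
  · have hscale : Tendsto (fun ε : ℝ => ε * ((j : ℝ) + 1)) (𝓝[>] 0) (𝓝[>] 0) :=
      tendsto_nhdsWithin_iff.mpr ⟨tendsto_nhdsWithin_of_tendsto_nhds (by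
        simpa using (continuous_mul_const ((j : ℝ) + 1)).tendsto 0),
        eventually_nhdsWithin_of_forall fun ε (hε : 0 < ε) => Set.mem_Ioi.mpr (by positivity)⟩
    simpa [div_eq_mul_inv, mul_comm] using
      ((tendsto_riemannSum_sq_mul_ramp_sq hp).comp hscale).div_const (((j : ℝ) + 1) ^ 3)
  · filter_upwards [self_mem_nhdsWithin] with ε (hε : 0 < ε) j
    rw [norm_div, Real.norm_eq_abs, Real.norm_of_nonneg (by positivity)]
    gcongr
    exact abs_riemannSum_le_one (by positivity) fun u ⟨hu, hu1⟩ => by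
      rw [abs_of_nonneg (by positivity)]
      exact mul_le_one₀ (pow_le_one₀ hu.le hu1) (by positivity)
        (pow_le_one₀ ramp_nonneg (ramp_le_one hu.le))

end mainTerm

lemma abs_two_mul_mul_sub_one_le (ν : Idx) :
    |2 * (ν.1 : ℝ) * ν.2 - 1| ≤ 2 * succProd ν := by
  have h1 : (0 : ℝ) ≤ ν.1 := Nat.cast_nonneg _
  have h2 : (0 : ℝ) ≤ ν.2 := Nat.cast_nonneg _
  rw [abs_le, succProd]
  constructor <;> nlinarith

lemma norm_cube_mul_cross_term_le {p ε : ℝ} (hp : 0 < p) (hε : 0 < ε) (ν : Idx) :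
    ‖ε ^ 3 * ((2 * (ν.1 : ℝ) * ν.2 - 1) * ramp p (ε * succProd ν) ^ 2)‖ ≤
      2 * (1 / ((ν.1 : ℝ) + 1) ^ 2 * (1 / ((ν.2 : ℝ) + 1) ^ 2)) := by
  have hc := succProd_pos ν
  have hu : 0 ≤ ε * succProd ν := by positivity
  calc ‖ε ^ 3 * ((2 * (ν.1 : ℝ) * ν.2 - 1) * ramp p (ε * succProd ν) ^ 2)‖
      ≤ ε ^ 3 * (2 * succProd ν * ramp p (ε * succProd ν) ^ 2) := by
        rw [norm_mul, norm_mul, Real.norm_eq_abs, Real.norm_eq_abs, abs_of_pos (by positivity),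
          Real.norm_of_nonneg (by positivity)]
        gcongr
        exact abs_two_mul_mul_sub_one_le ν
    _ = 2 * ((ε * succProd ν) ^ 3 * ramp p (ε * succProd ν) ^ 2) / succProd ν ^ 2 := by
        field_simp
    _ ≤ 2 / succProd ν ^ 2 := by
        gcongr
        exact mul_le_of_le_one_right zero_le_two (pow_three_mul_ramp_sq_le_one hp hu)
    _ = 2 * (1 / ((ν.1 : ℝ) + 1) ^ 2 * (1 / ((ν.2 : ℝ) + 1) ^ 2)) := by
        rw [succProd]
        field_simp

lemma tendsto_tsum_cross_term {p : ℝ} (hp : 0 < p) :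
    Tendsto (fun ε : ℝ => ∑' ν : Idx,
        ε ^ 3 * ((2 * (ν.1 : ℝ) * ν.2 - 1) * ramp p (ε * succProd ν) ^ 2)) (𝓝[>] 0) (𝓝 0) := by
  have hbound : Summable fun ν : Idx => 2 * (1 / ((ν.1 : ℝ) + 1) ^ 2 * (1 / ((ν.2 : ℝ) + 1) ^ 2)) :=
    (((summable_one_div_succ_pow (k := 2) one_lt_two).mul_of_nonneg
      (summable_one_div_succ_pow (k := 2) one_lt_two) (fun _ => by positivity)
      fun _ => by positivity)).mul_left 2
  have hlim : ∀ ν : Idx, Tendsto (fun ε : ℝ =>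
      ε ^ 3 * ((2 * (ν.1 : ℝ) * ν.2 - 1) * ramp p (ε * succProd ν) ^ 2)) (𝓝[>] 0) (𝓝 0) := by
    intro ν
    refine squeeze_zero_norm' (a := fun ε => ε ^ 3 * |2 * (ν.1 : ℝ) * ν.2 - 1|) ?_ ?_
    · filter_upwards [self_mem_nhdsWithin] with ε (hε : 0 < ε)
      have hR : ramp p (ε * succProd ν) ^ 2 ≤ 1 :=
        pow_le_one₀ ramp_nonneg (ramp_le_one (mul_pos hε (succProd_pos ν)).le)
      rw [norm_mul, norm_mul, Real.norm_eq_abs, Real.norm_eq_abs, abs_of_pos (by positivity),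
        Real.norm_of_nonneg (by positivity)]
      gcongr
      exact mul_le_of_le_one_right (abs_nonneg _) hR
    · exact tendsto_nhdsWithin_of_tendsto_nhds (by
        simpa using ((continuous_pow 3).tendsto 0).mul_const |2 * (ν.1 : ℝ) * ν.2 - 1|)
  simpa using tendsto_tsum_of_dominated_convergence hbound hlim
    (eventually_nhdsWithin_of_forall fun ε hε => norm_cube_mul_cross_term_le hp hε)

lemma tendsto_cube_mul_tsum {p : ℝ} (hp : 0 < p) :
    Tendsto (fun ε : ℝ =>
        ε ^ 3 * ∑' ν : Idx, ((ν.1 : ℝ) + ν.2 + 1) ^ 2 * ramp p (ε * succProd ν) ^ 2) (𝓝[>] 0)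
      (𝓝 (16 * Bsum * p ^ 2 / (3 * (2 * p + 3) * (4 * p + 3)))) := by
  have hlim := ((tendsto_tsum_riemannSum_div_cube hp).const_mul 2).add (tendsto_tsum_cross_term hp)
  convert hlim.congr' ?_ using 2
  · ring
  filter_upwards [self_mem_nhdsWithin] with ε (hε : 0 < ε)
  have hs : ∀ g : Idx → ℝ, Summable fun ν => g ν * ramp p (ε * succProd ν) ^ 2 := fun g => by
    simpa [sq, mul_assoc] using summable_mul_ramp hp hε fun ν => g ν * ramp p (ε * succProd ν)
  have hsplit : ∀ ν : Idx, ((ν.1 : ℝ) + ν.2 + 1) ^ 2 * ramp p (ε * succProd ν) ^ 2 =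
      ((ν.1 : ℝ) + 1) ^ 2 * ramp p (ε * succProd ν) ^ 2 +
        ((ν.2 : ℝ) + 1) ^ 2 * ramp p (ε * succProd ν) ^ 2 +
        (2 * (ν.1 : ℝ) * ν.2 - 1) * ramp p (ε * succProd ν) ^ 2 := fun ν => by ring
  rw [tsum_congr hsplit, ((hs _).add (hs _)).tsum_add (hs _), (hs _).tsum_add (hs _),
    tsum_fst_sq_eq_tsum_snd_sq, tsum_mul_left, ← cube_mul_tsum_snd_sq_eq hp hε]
  ring

lemma sigT_pow_four (ν : Idx) : sigT ν ^ 4 = ((ν.1 : ℝ) + ν.2 + 1) ^ 2 := by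
  rw [sigT, ← Real.rpow_natCast, ← Real.rpow_mul (by positivity)]
  norm_num

lemma max_one_sub_mul_aT_sq {p A : ℝ} (hp : 0 < p) (hA : 0 < A) (ν : Idx) :
    max (1 - A * aT p ν ^ 2) 0 = ramp p (A ^ (1 / (2 * p)) * succProd ν) := by
  have hc := (succProd_pos ν).le
  rw [ramp, Real.mul_rpow (by positivity) hc, ← Real.rpow_mul hA.le,
    one_div_mul_cancel (by positivity), Real.rpow_one, show aT p ν = succProd ν ^ p from rfl,
    ← Real.rpow_natCast, ← Real.rpow_mul hc, Nat.cast_ofNat, mul_comm p]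

lemma J0fun_eq_tsum_ramp {p A : ℝ} (hp : 0 < p) (hA : 0 < A) :
    J0fun p A = ∑' ν : Idx,
      ((ν.1 : ℝ) + ν.2 + 1) ^ 2 * ramp p (A ^ (1 / (2 * p)) * succProd ν) ^ 2 := by
  simp only [J0fun, sigT_pow_four, max_one_sub_mul_aT_sq hp hA]

lemma max_zero_sq_eq_mul (x : ℝ) : max x 0 ^ 2 = max x 0 * x := by
  rcases le_total x 0 with hx | hx
  · simp [max_eq_right hx]
  · rw [max_eq_left hx, sq]

lemma J0fun_eq_J1fun_sub_J2fun {p A : ℝ} (hp : 0 < p) (hA : 0 < A) :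
    J0fun p A = J1fun p A - J2fun p A := by
  have hs : ∀ g : Idx → ℝ, Summable fun ν => g ν * max (1 - A * aT p ν ^ 2) 0 := fun g => by
    simpa only [max_one_sub_mul_aT_sq hp hA] using
      summable_mul_ramp hp (Real.rpow_pos_of_pos hA _) g
  rw [J0fun, J1fun, J2fun, ← tsum_mul_left, ← (hs _).tsum_sub ((hs _).mul_left A)]
  refine tsum_congr fun ν => ?_
  rw [max_zero_sq_eq_mul]
  ring

/-- For every `p > 0`, `J₀(A) ~ (16Bp²/(3(2p+3)(4p+3))) A^{−3/(2p)}` as `A → 0⁺`;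
moreover `J₀(A) = J₁(A) − J₂(A)` for all `A > 0`. -/
theorem J0fun_asymptotics (p : ℝ) (hp : 0 < p) :
    Tendsto (fun A : ℝ => A ^ (3 / (2 * p)) * J0fun p A) (𝓝[>] (0 : ℝ))
      (𝓝 (16 * Bsum * p ^ 2 / (3 * (2 * p + 3) * (4 * p + 3)))) ∧
    ∀ A : ℝ, 0 < A → J0fun p A = J1fun p A - J2fun p A := by
  refine ⟨?_, fun A hA => J0fun_eq_J1fun_sub_J2fun hp hA⟩
  refine ((tendsto_cube_mul_tsum hp).comp
    (tendsto_rpow_nhdsGT_zero (q := 1 / (2 * p)) (by positivity))).congr' ?_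
  filter_upwards [self_mem_nhdsWithin] with A (hA : 0 < A)
  rw [Function.comp_apply, J0fun_eq_tsum_ramp hp hA, ← Real.rpow_natCast, ← Real.rpow_mul hA.le]
  congr 2
  field_simp
  norm_num

end
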